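/- arXiv:2205.12772 — 8 statements merged into one kernel-verified Lean document; each statement's English description precedes it below -/
import Mathlib

section
/- Let f : ℝ^d → ℝ be differentiable and μ-strongly convex with μ > 0 and minimizer x⋆. If X : ℝ → ℝ^d is differentiable and satisfies the gradient flow X'(t) = -∇f(X t) for all t ≥ 0, then for all t ≥ 0, f(X t) - f(x⋆) ≤ exp(-2 μ t) * (f(X 0) - f(x⋆)). -/
open scoped RealInnerProductSpace
open Real Set

theorem gradient_flow_strongly_convex_linear_rate
    (d : ℕ) (μ : ℝ) (hμ : 0 < μ)
    (f : EuclideanSpace ℝ (Fin d) → ℝ) (hf : Differentiable ℝ f)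
    (xstar : EuclideanSpace ℝ (Fin d))
    (hsc : ∀ x y, f y ≥ f x + ⟪gradient f x, y - x⟫ + (μ / 2) * ‖y - x‖ ^ 2)
    (hmin : ∀ y, f xstar ≤ f y)
    (X : ℝ → EuclideanSpace ℝ (Fin d)) (hXdiff : Differentiable ℝ X)
    (hX : ∀ t ≥ (0 : ℝ), HasDerivAt X (-(gradient f (X t))) t) :
    ∀ t ≥ (0 : ℝ), f (X t) - f xstar ≤ Real.exp (-2 * μ * t) * (f (X 0) - f xstar) := by
  -- PL inequality
  have hPL : ∀ x, 2 * μ * (f x - f xstar) ≤ ‖gradient f x‖ ^ 2 := by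
    intro x
    have h := hsc x xstar
    have key : f x - f xstar ≤ ⟪gradient f x, x - xstar⟫ - (μ / 2) * ‖xstar - x‖ ^ 2 := by
      have : ⟪gradient f x, xstar - x⟫ = -⟪gradient f x, x - xstar⟫ := by
        rw [← inner_neg_right]; congr 1; abel
      linarith [h, this]
    have hcs : ⟪gradient f x, x - xstar⟫ ≤ ‖gradient f x‖ * ‖x - xstar‖ :=
      real_inner_le_norm _ _
    have hnorm : ‖xstar - x‖ = ‖x - xstar‖ := by rw [norm_sub_rev]
    rw [hnorm] at key
    have key2 : f x - f xstar ≤ ‖gradient f x‖ * ‖x - xstar‖ - (μ / 2) * ‖x - xstar‖ ^ 2 :=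
      by linarith
    nlinarith [key2, sq_nonneg (‖gradient f x‖ - μ * ‖x - xstar‖), hμ,
      mul_le_mul_of_nonneg_left key2 (by linarith : (0:ℝ) ≤ 2 * μ)]
  set g : ℝ → ℝ := fun t => f (X t) - f xstar with hg
  have hgderiv : ∀ t ≥ (0:ℝ), HasDerivAt g (-‖gradient f (X t)‖ ^ 2) t := by
    intro t ht
    have h1 : HasDerivAt (fun t => f (X t))
        ((fderiv ℝ f (X t)) (-(gradient f (X t)))) t :=
      (hf (X t)).hasFDerivAt.comp_hasDerivAt t (hX t ht)
    have h2 : (fderiv ℝ f (X t)) (-(gradient f (X t))) = -‖gradient f (X t)‖ ^ 2 := by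
      have hgrad : HasGradientAt f (gradient f (X t)) (X t) :=
        (hf (X t)).hasGradientAt
      have heq := hgrad.hasFDerivAt.fderiv
      rw [heq, InnerProductSpace.toDual_apply_apply, inner_neg_right, real_inner_self_eq_norm_sq]
    rw [h2] at h1
    exact h1.sub_const _
  -- h t = exp (2 μ t) * g t is antitone on [0, ∞)
  set h : ℝ → ℝ := fun t => Real.exp (2 * μ * t) * g t with hh
  have hgdiff : Differentiable ℝ g := fun t => ((hf.comp hXdiff) t).sub_const _
  have hhdiff : Differentiable ℝ h :=
    (((differentiable_const _).mul differentiable_id).exp).mul hgdiff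
  have hanti : AntitoneOn h (Ici (0:ℝ)) := by
    apply antitoneOn_of_deriv_nonpos (convex_Ici 0) hhdiff.continuous.continuousOn
      (hhdiff.differentiableOn)
    intro t ht
    rw [interior_Ici] at ht
    have ht0 : (0:ℝ) ≤ t := le_of_lt ht
    have hde : HasDerivAt h (Real.exp (2 * μ * t) * (2 * μ) * g t
        + Real.exp (2 * μ * t) * (-‖gradient f (X t)‖ ^ 2)) t := by
      have he : HasDerivAt (fun t => Real.exp (2 * μ * t)) (Real.exp (2 * μ * t) * (2 * μ)) t := by
        have : HasDerivAt (fun t : ℝ => 2 * μ * t) (2 * μ) t := by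
          simpa using (hasDerivAt_id t).const_mul (2 * μ)
        exact this.exp
      exact he.mul (hgderiv t ht0)
    rw [hde.deriv]
    have hPLt := hPL (X t)
    have hexp : 0 < Real.exp (2 * μ * t) := Real.exp_pos _
    have h3 : Real.exp (2 * μ * t) * (2 * μ * (f (X t) - f xstar))
        ≤ Real.exp (2 * μ * t) * ‖gradient f (X t)‖ ^ 2 :=
      mul_le_mul_of_nonneg_left hPLt hexp.le
    have hgt : g t = f (X t) - f xstar := rfl
    rw [hgt]
    nlinarith [h3]
  intro t ht
  have := hanti (self_mem_Ici) ht ht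
  simp only [hh, hg, mul_zero, Real.exp_zero, one_mul] at this
  have hexp : 0 < Real.exp (2 * μ * t) := Real.exp_pos _
  have : f (X t) - f xstar ≤ (f (X 0) - f xstar) / Real.exp (2 * μ * t) := by
    rw [le_div_iff₀ hexp]
    linarith [this]
  calc f (X t) - f xstar ≤ (f (X 0) - f xstar) / Real.exp (2 * μ * t) := this
    _ = Real.exp (-2 * μ * t) * (f (X 0) - f xstar) := by
        rw [div_eq_mul_inv, ← Real.exp_neg, mul_comm]; ring_nf
end

section
/- Let f : ℝ^d → ℝ be convex and differentiable with minimizer x⋆, and let X solve the gradient flow X'(t) = -∇f(X t) with X(0) = x₀. Define V(t) = t * (f(X t) - f(x⋆)) + (1/2) * ‖X t - x⋆‖². Then V is nonincreasing on [0, ∞), and consequently for all t > 0, f(X t) - f(x⋆) ≤ ‖x₀ - x⋆‖² / (2 t). -/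
/-!
Along the flow, `d/dt f(X t) = -‖∇f(X t)‖²` and `d/dt ½‖X t - x⋆‖² = -⟪X t - x⋆, ∇f(X t)⟫`, so
`V' = (f(X t) - f x⋆) - t‖∇f(X t)‖² - ⟪X t - x⋆, ∇f(X t)⟫`. The first-order convexity inequality at
`y = x⋆` bounds the first term by the third, hence `V' ≤ 0` for `t ≥ 0`. Then
`t (f(X t) - f x⋆) ≤ V t ≤ V 0 = ½‖x₀ - x⋆‖²`.
-/

open scoped RealInnerProductSpace
open Set

namespace GradientFlow

variable {E : Type*} [NormedAddCommGroup E] {f : E → ℝ} {X : ℝ → E}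

noncomputable def lyapunov (f : E → ℝ) (X : ℝ → E) (xstar : E) (t : ℝ) : ℝ :=
  t * (f (X t) - f xstar) + (1 / 2) * ‖X t - xstar‖ ^ 2

theorem mul_sub_le_of_antitoneOn_lyapunov {xstar : E}
    (hV : AntitoneOn (lyapunov f X xstar) (Ici 0)) {t : ℝ} (ht : 0 ≤ t) :
    t * (f (X t) - f xstar) ≤ (1 / 2) * ‖X 0 - xstar‖ ^ 2 := by
  have hdecay := hV self_mem_Ici ht ht
  simp only [lyapunov, zero_mul, zero_add] at hdecay
  linarith [sq_nonneg ‖X t - xstar‖]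

section InnerProductSpace

variable [InnerProductSpace ℝ E] [CompleteSpace E]

theorem hasDerivAt_comp_flow (t : ℝ) (hf : DifferentiableAt ℝ f (X t))
    (hX : HasDerivAt X (-gradient f (X t)) t) :
    HasDerivAt (fun s => f (X s)) (-‖gradient f (X t)‖ ^ 2) t := by
  simpa only [Function.comp_def, InnerProductSpace.toDual_apply_apply, inner_neg_right,
    real_inner_self_eq_norm_sq] using hf.hasGradientAt.hasFDerivAt.comp_hasDerivAt t hX

theorem hasDerivAt_lyapunov (xstar : E) (t : ℝ) (hf : DifferentiableAt ℝ f (X t))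
    (hX : HasDerivAt X (-gradient f (X t)) t) :
    HasDerivAt (lyapunov f X xstar)
      (f (X t) - f xstar - t * ‖gradient f (X t)‖ ^ 2 - ⟪X t - xstar, gradient f (X t)⟫) t := by
  have hvalue : HasDerivAt (fun s => s * (f (X s) - f xstar))
      (1 * (f (X t) - f xstar) + t * -‖gradient f (X t)‖ ^ 2) t :=
    (hasDerivAt_id t).mul ((hasDerivAt_comp_flow t hf hX).sub_const _)
  have hdist := ((hX.sub_const xstar).norm_sq).const_mul (1 / 2 : ℝ)
  refine (hvalue.add hdist).congr_deriv ?_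
  rw [inner_neg_right]
  ring

theorem lyapunov_deriv_nonpos {xstar : E}
    (hconv : ∀ x, f x + ⟪gradient f x, xstar - x⟫ ≤ f xstar) (x : E) {t : ℝ} (ht : 0 ≤ t) :
    f x - f xstar - t * ‖gradient f x‖ ^ 2 - ⟪x - xstar, gradient f x⟫ ≤ 0 := by
  have hgap : ⟪gradient f x, xstar - x⟫ = -⟪x - xstar, gradient f x⟫ := by
    rw [real_inner_comm, ← inner_neg_left, neg_sub]
  have hdescent := mul_nonneg ht (sq_nonneg ‖gradient f x‖)
  linarith [hconv x]

theorem antitoneOn_lyapunov {xstar : E} (hf : ∀ t, DifferentiableAt ℝ f (X t))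
    (hconv : ∀ x, f x + ⟪gradient f x, xstar - x⟫ ≤ f xstar)
    (hX : ∀ t, HasDerivAt X (-gradient f (X t)) t) :
    AntitoneOn (lyapunov f X xstar) (Ici 0) := by
  have hV t := hasDerivAt_lyapunov xstar t (hf t) (hX t)
  refine antitoneOn_of_hasDerivWithinAt_nonpos (convex_Ici 0)
    (fun t _ => (hV t).continuousAt.continuousWithinAt) (fun t _ => (hV t).hasDerivWithinAt)
    fun t ht => lyapunov_deriv_nonpos hconv (X t) ?_
  rw [interior_Ici] at ht
  exact le_of_lt ht

end InnerProductSpace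

end GradientFlow

open GradientFlow in
theorem gradient_flow_convex_sublinear_rate_general
    (d : ℕ) (f : EuclideanSpace ℝ (Fin d) → ℝ) (hf : Differentiable ℝ f)
    (hconv : ∀ x y, f y ≥ f x + ⟪gradient f x, y - x⟫)
    (xstar : EuclideanSpace ℝ (Fin d))
    (x₀ : EuclideanSpace ℝ (Fin d))
    (X : ℝ → EuclideanSpace ℝ (Fin d)) (hX0 : X 0 = x₀)
    (hX : ∀ t, HasDerivAt X (-(gradient f (X t))) t) :
    AntitoneOn (fun t => t * (f (X t) - f xstar) + (1 / 2) * ‖X t - xstar‖ ^ 2)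
        (Set.Ici (0 : ℝ)) ∧
      ∀ t > (0 : ℝ), f (X t) - f xstar ≤ ‖x₀ - xstar‖ ^ 2 / (2 * t) := by
  have hV : AntitoneOn (lyapunov f X xstar) (Ici 0) :=
    antitoneOn_lyapunov (fun t => hf (X t)) (fun x => hconv x xstar) hX
  refine ⟨hV, fun t ht => ?_⟩
  have hbound := mul_sub_le_of_antitoneOn_lyapunov hV ht.le
  rw [hX0] at hbound
  rw [le_div_iff₀ (by positivity)]
  linarith

theorem gradient_flow_convex_sublinear_rate
    (d : ℕ) (f : EuclideanSpace ℝ (Fin d) → ℝ) (hf : Differentiable ℝ f)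
    (hconv : ∀ x y, f y ≥ f x + ⟪gradient f x, y - x⟫)
    (xstar : EuclideanSpace ℝ (Fin d)) (hmin : ∀ y, f xstar ≤ f y)
    (x₀ : EuclideanSpace ℝ (Fin d))
    (X : ℝ → EuclideanSpace ℝ (Fin d)) (hX0 : X 0 = x₀)
    (hX : ∀ t, HasDerivAt X (-(gradient f (X t))) t) :
    AntitoneOn (fun t => t * (f (X t) - f xstar) + (1 / 2) * ‖X t - xstar‖ ^ 2)
        (Set.Ici (0 : ℝ)) ∧
      ∀ t > (0 : ℝ), f (X t) - f xstar ≤ ‖x₀ - xstar‖ ^ 2 / (2 * t) :=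
  gradient_flow_convex_sublinear_rate_general d f hf hconv xstar x₀ X hX0 hX
end

section
/- Let f : ℝ^d → ℝ be convex and differentiable with minimizer x⋆, and let X solve the gradient flow X' = -∇f(X). Then for all t ≥ 0, d/dt [t (f(X t) - f(x⋆)) + (1/2)‖X t - x⋆‖²] ≤ - t ‖∇f(X t)‖². -/
open scoped RealInnerProductSpace
open Real Set

/-!
Along the flow the Lyapunov function has derivative
`(f (X t) - f x⋆) - t ‖∇f (X t)‖² - ⟪∇f (X t), X t - x⋆⟫`, and the first-order convexity
inequality at `X t`, tested at `x⋆`, says exactly that the first and last terms sum to a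
nonpositive number.
-/

section GradientCalculus

variable {E : Type*} [NormedAddCommGroup E] [InnerProductSpace ℝ E] [CompleteSpace E]

theorem HasGradientAt.comp_hasDerivAt {f : E → ℝ} {g : E} {X : ℝ → E} {v : E} {t : ℝ}
    (hf : HasGradientAt f g (X t)) (hX : HasDerivAt X v t) :
    HasDerivAt (fun s => f (X s)) ⟪g, v⟫ t := by
  have h := hf.hasFDerivAt.comp_hasDerivAt t hX
  rw [InnerProductSpace.toDual_apply_apply] at h
  exact h

theorem hasDerivAt_lyapunov {f : E → ℝ} {X : ℝ → E} {v : E} {t : ℝ}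
    (hf : DifferentiableAt ℝ f (X t)) (hX : HasDerivAt X v t) (c : ℝ) (x : E) :
    HasDerivAt (fun s => s * (f (X s) - c) + (1 / 2) * ‖X s - x‖ ^ 2)
      ((f (X t) - c) + t * ⟪gradient f (X t), v⟫ + ⟪X t - x, v⟫) t := by
  have hfX := hf.hasGradientAt.comp_hasDerivAt hX
  have hdist := (hX.sub_const x).norm_sq
  refine (((hasDerivAt_id t).mul (hfX.sub_const c)).add (hdist.const_mul (1 / 2))).congr_deriv ?_
  simp only [id, one_mul]
  ring

end GradientCalculus

theorem gradient_flow_convex_lyapunov_derivative_bound_general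
    (d : ℕ) (f : EuclideanSpace ℝ (Fin d) → ℝ) (hf : Differentiable ℝ f)
    (hconv : ∀ x y, f y ≥ f x + ⟪gradient f x, y - x⟫)
    (xstar : EuclideanSpace ℝ (Fin d))
    (X : ℝ → EuclideanSpace ℝ (Fin d))
    (hX : ∀ t, HasDerivAt X (-(gradient f (X t))) t) :
    ∀ t ≥ (0 : ℝ),
      deriv (fun s => s * (f (X s) - f xstar) + (1 / 2) * ‖X s - xstar‖ ^ 2) t ≤
        -t * ‖gradient f (X t)‖ ^ 2 := by
  intro t _
  have hconvex : f (X t) - f xstar ≤ ⟪gradient f (X t), X t - xstar⟫ := by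
    have h := hconv (X t) xstar
    rw [← neg_sub, inner_neg_right] at h
    linarith
  rw [(hasDerivAt_lyapunov (hf (X t)) (hX t) (f xstar) xstar).deriv, inner_neg_right,
    real_inner_self_eq_norm_sq, inner_neg_right, real_inner_comm]
  linarith

theorem gradient_flow_convex_lyapunov_derivative_bound
    (d : ℕ) (f : EuclideanSpace ℝ (Fin d) → ℝ) (hf : Differentiable ℝ f)
    (hconv : ∀ x y, f y ≥ f x + ⟪gradient f x, y - x⟫)
    (xstar : EuclideanSpace ℝ (Fin d)) (hmin : ∀ y, f xstar ≤ f y)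
    (X : ℝ → EuclideanSpace ℝ (Fin d))
    (hX : ∀ t, HasDerivAt X (-(gradient f (X t))) t) :
    ∀ t ≥ (0 : ℝ),
      deriv (fun s => s * (f (X s) - f xstar) + (1 / 2) * ‖X s - xstar‖ ^ 2) t ≤
        -t * ‖gradient f (X t)‖ ^ 2 :=
  gradient_flow_convex_lyapunov_derivative_bound_general d f hf hconv xstar X hX
end

section
/- Let μ > 0, f : ℝ^d → ℝ be differentiable and μ-strongly convex with minimizer x⋆, and let X be a twice-differentiable solution of the Polyak damped oscillator X''(t) + 2√μ X'(t) + ∇f(X t) = 0. Define V(t) = f(X t) - f(x⋆) + (1/2)(μ ‖X t - x⋆‖² + 2√μ ⟪X t - x⋆, X'(t)⟫ + ‖X'(t)‖²). Then V(t) ≥ 0 and V'(t) ≤ -√μ V(t) for all t, hence V(t) ≤ exp(-√μ t) V(0). -/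
/-!
With `c = √μ`, completing the square writes `V = f X - f x⋆ + ½‖c (X - x⋆) + X'‖²`, which is
nonnegative because `x⋆` minimizes `f`. Along the flow `c X' + X'' = -(c X' + ∇f X)`, and
strong convexity between `X` and `x⋆` turns the derivative of `V` into `-c V - (c/2)‖X'‖²`
at most; Grönwall's inequality then gives the exponential decay.
-/

open scoped RealInnerProductSpace
open Real Set

theorem le_exp_mul_of_hasDerivAt_le_mul {V V' : ℝ → ℝ} {K : ℝ}
    (hV : ∀ t, HasDerivAt V (V' t) t) (hdiss : ∀ t, V' t ≤ K * V t) {t : ℝ} (ht : 0 ≤ t) :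
    V t ≤ exp (K * t) * V 0 := by
  have h := le_gronwallBound_of_liminf_deriv_right_le (a := 0) (b := t) (ε := 0)
    (fun s _ => (hV s).continuousAt.continuousWithinAt)
    (fun s _ _ hr => (hV s).hasDerivWithinAt.liminf_right_slope_le hr) le_rfl
    (fun s _ => by simpa using hdiss s) t ⟨ht, le_rfl⟩
  rwa [gronwallBound_ε0, sub_zero, mul_comm] at h

section Polyak

variable {E : Type*} [NormedAddCommGroup E] [InnerProductSpace ℝ E]

theorem norm_smul_add_sq (c : ℝ) (u v : E) :
    ‖c • u + v‖ ^ 2 = c ^ 2 * ‖u‖ ^ 2 + 2 * c * ⟪u, v⟫ + ‖v‖ ^ 2 := by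
  rw [norm_add_sq_real, norm_smul, real_inner_smul_left, mul_pow, Real.norm_eq_abs, sq_abs]
  ring

/-- The Lyapunov function of `x'' + 2c x' + ∇f x = 0` at position `x` and velocity `v`. -/
noncomputable def polyakEnergy (f : E → ℝ) (xstar : E) (c : ℝ) (x v : E) : ℝ :=
  f x - f xstar + ‖c • (x - xstar) + v‖ ^ 2 / 2

variable {f : E → ℝ} {xstar : E} {c : ℝ}

theorem polyakEnergy_nonneg (hmin : ∀ y, f xstar ≤ f y) (x v : E) :
    0 ≤ polyakEnergy f xstar c x v := by
  have := hmin x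
  unfold polyakEnergy
  positivity

theorem hasDerivAt_polyakEnergy [CompleteSpace E] {X X' : ℝ → E} {x' x'' : E} {t : ℝ}
    (hf : DifferentiableAt ℝ f (X t)) (hX : HasDerivAt X x' t) (hX' : HasDerivAt X' x'' t) :
    HasDerivAt (fun s => polyakEnergy f xstar c (X s) (X' s))
      (⟪gradient f (X t), x'⟫ + ⟪c • (X t - xstar) + X' t, c • x' + x''⟫) t := by
  have hfX : HasDerivAt (fun s => f (X s)) ⟪gradient f (X t), x'⟫ t := by
    rw [gradient, InnerProductSpace.toDual_symm_apply]
    exact hf.hasFDerivAt.comp_hasDerivAt t hX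
  have hw : HasDerivAt (fun s => c • (X s - xstar) + X' s) (c • x' + x'') t :=
    ((hX.sub_const xstar).const_smul c).add hX'
  exact ((hfX.sub_const (f xstar)).add (hw.norm_sq.div_const 2)).congr_deriv (by ring)

theorem polyakEnergy_dissipation_le (hc : 0 ≤ c) {x v g : E}
    (hsc : f xstar ≥ f x + ⟪g, xstar - x⟫ + (c ^ 2 / 2) * ‖xstar - x‖ ^ 2) :
    ⟪g, v⟫ - ⟪c • (x - xstar) + v, c • v + g⟫ ≤ -c * polyakEnergy f xstar c x v := by
  rw [← neg_sub x xstar, inner_neg_right, norm_neg] at hsc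
  have hv : 0 ≤ c * ‖v‖ ^ 2 := by positivity
  simp only [polyakEnergy, norm_smul_add_sq, inner_add_left, inner_add_right, inner_smul_left,
    inner_smul_right, real_inner_self_eq_norm_sq, real_inner_comm g, RCLike.conj_to_real]
  -- `c · hsc` cancels every term except `-(c/2)‖v‖²`
  nlinarith [mul_le_mul_of_nonneg_left hsc hc]

end Polyak

theorem polyak_oscillator_lyapunov_sqrt_mu_rate
    (d : ℕ) (μ : ℝ) (hμ : 0 < μ)
    (f : EuclideanSpace ℝ (Fin d) → ℝ) (hf : Differentiable ℝ f)
    (xstar : EuclideanSpace ℝ (Fin d))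
    (hsc : ∀ x y, f y ≥ f x + ⟪gradient f x, y - x⟫ + (μ / 2) * ‖y - x‖ ^ 2)
    (hmin : ∀ y, f xstar ≤ f y)
    (X X' X'' : ℝ → EuclideanSpace ℝ (Fin d))
    (hX : ∀ t, HasDerivAt X (X' t) t)
    (hX' : ∀ t, HasDerivAt X' (X'' t) t)
    (hODE : ∀ t, X'' t + (2 * Real.sqrt μ) • X' t + gradient f (X t) = 0)
    (V : ℝ → ℝ)
    (hV : ∀ t, V t = f (X t) - f xstar + (1 / 2) * (μ * ‖X t - xstar‖ ^ 2
        + 2 * Real.sqrt μ * ⟪X t - xstar, X' t⟫ + ‖X' t‖ ^ 2)) :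
    (∀ t, 0 ≤ V t) ∧ (∀ t, deriv V t ≤ -Real.sqrt μ * V t) ∧
      ∀ t ≥ (0 : ℝ), V t ≤ Real.exp (-Real.sqrt μ * t) * V 0 := by
  set c := Real.sqrt μ
  have hc2 : c ^ 2 = μ := Real.sq_sqrt hμ.le
  have hVE : V = fun t => polyakEnergy f xstar c (X t) (X' t) := by
    funext t
    rw [hV, polyakEnergy, norm_smul_add_sq, hc2]
    ring
  have hderiv : ∀ t, HasDerivAt V
      (⟪gradient f (X t), X' t⟫ - ⟪c • (X t - xstar) + X' t, c • X' t + gradient f (X t)⟫) t := by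
    intro t
    have hflow : c • X' t + X'' t = -(c • X' t + gradient f (X t)) := by
      rw [eq_neg_iff_add_eq_zero, ← hODE t, two_mul, add_smul]
      abel
    rw [hVE, sub_eq_add_neg, ← inner_neg_right, ← hflow]
    exact hasDerivAt_polyakEnergy (hf _) (hX t) (hX' t)
  have hdiss : ∀ t, deriv V t ≤ -c * V t := fun t => by
    rw [(hderiv t).deriv, hVE]
    exact polyakEnergy_dissipation_le (Real.sqrt_nonneg μ) (by rw [hc2]; exact hsc (X t) xstar)
  exact ⟨fun t => hVE ▸ polyakEnergy_nonneg hmin _ _, hdiss, fun t ht =>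
    le_exp_mul_of_hasDerivAt_le_mul (fun s => (hderiv s).differentiableAt.hasDerivAt) hdiss ht⟩
end

section
/- Let f : ℝ^d → ℝ be convex differentiable with minimizer x⋆, let α : [0,∞) → [0,∞) be continuous, and let X be a differentiable solution of the non-autonomous gradient flow X'(t) = -α(t) ∇f(X t) with X 0 = x₀. Define A(t) = ∫₀ᵗ α(s) ds. Then V(t) = A(t)(f(X t) - f(x⋆)) + (1/2)‖X t - x⋆‖² is nonincreasing, and hence f(X t) - f(x⋆) ≤ ‖x₀ - x⋆‖²/(2 A(t)) whenever A(t) > 0. -/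
/-!
Along the flow, `V' = α (f X - f x⋆) - A α ‖∇f X‖² - α ⟪X - x⋆, ∇f X⟫`, and the convexity
inequality `f X - f x⋆ ≤ ⟪∇f X, X - x⋆⟫` together with `α, A ≥ 0` makes this nonpositive.
Hence `A t (f (X t) - f x⋆) ≤ V t ≤ V 0 = ‖x₀ - x⋆‖² / 2`.
-/

open scoped RealInnerProductSpace
open Set

section Primitive

variable {F : Type*} [NormedAddCommGroup F] [NormedSpace ℝ F] {α : ℝ → F} {a : ℝ}

theorem continuousOn_integral_of_continuousOn_Ici (hα : ContinuousOn α (Ici a)) :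
    ContinuousOn (fun u => ∫ s in a..u, α s) (Ici a) := by
  intro t ht
  have hle : a ≤ t + 1 := by linarith [mem_Ici.1 ht]
  have hIcc : ContinuousOn (fun u => ∫ s in a..u, α s) (Icc a (t + 1)) := by
    have hsub : uIcc a (t + 1) ⊆ Ici a := by rw [uIcc_of_le hle]; exact Icc_subset_Ici_self
    rw [← uIcc_of_le hle]
    exact intervalIntegral.continuousOn_primitive_interval (hα.mono hsub).integrableOn_uIcc
  refine (hIcc t ⟨ht, by linarith⟩).mono_of_mem_nhdsWithin ?_
  rw [← Ici_inter_Iic]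
  exact inter_mem_nhdsWithin _ (Iic_mem_nhds (by linarith))

theorem hasDerivAt_integral_of_continuousOn_Ici [CompleteSpace F] (hα : ContinuousOn α (Ici a))
    {t : ℝ} (ht : a < t) : HasDerivAt (fun u => ∫ s in a..u, α s) (α t) t :=
  intervalIntegral.integral_hasDerivAt_right
    (hα.mono (uIcc_of_le ht.le ▸ Icc_subset_Ici_self)).intervalIntegrable
    ((hα.mono Ioi_subset_Ici_self).stronglyMeasurableAtFilter isOpen_Ioi t ht)
    (hα.continuousAt (Ici_mem_nhds ht))

end Primitive

section Energy

variable {E : Type*} [NormedAddCommGroup E] [InnerProductSpace ℝ E]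

noncomputable def gradientFlowEnergy (A : ℝ → ℝ) (f : E → ℝ) (X : ℝ → E) (xstar : E) (t : ℝ) : ℝ :=
  A t * (f (X t) - f xstar) + 1 / 2 * ‖X t - xstar‖ ^ 2

theorem gradientFlowEnergy_deriv_nonpos {a A r : ℝ} {g y : E} (ha : 0 ≤ a) (hA : 0 ≤ A)
    (hr : r ≤ ⟪g, y⟫) : a * r + A * ⟪g, -(a • g)⟫ + ⟪y, -(a • g)⟫ ≤ 0 := by
  rw [inner_neg_right, inner_neg_right, real_inner_smul_right, real_inner_smul_right,
    real_inner_self_eq_norm_sq, real_inner_comm]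
  nlinarith [mul_le_mul_of_nonneg_left hr ha, mul_nonneg hA (mul_nonneg ha (sq_nonneg ‖g‖))]

variable [CompleteSpace E]

theorem hasDerivAt_gradientFlowEnergy {A : ℝ → ℝ} {f : E → ℝ} {X : ℝ → E} {xstar : E}
    {a t : ℝ} {g v : E} (hA : HasDerivAt A a t) (hX : HasDerivAt X v t)
    (hf : HasGradientAt f g (X t)) :
    HasDerivAt (gradientFlowEnergy A f X xstar)
      (a * (f (X t) - f xstar) + A t * ⟪g, v⟫ + ⟪X t - xstar, v⟫) t := by
  have h := (hA.mul ((hf.hasFDerivAt.comp_hasDerivAt t hX).sub_const (f xstar))).add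
    (((hX.sub_const xstar).norm_sq).const_mul (1 / 2 : ℝ))
  simp only [Function.comp_def, InnerProductSpace.toDual_apply_apply] at h
  exact h.congr_deriv (by ring)

theorem antitoneOn_gradientFlowEnergy {f : E → ℝ} {xstar : E} {α A : ℝ → ℝ} {X : ℝ → E}
    (hf : Differentiable ℝ f) (hconv : ∀ x, f x + ⟪gradient f x, xstar - x⟫ ≤ f xstar)
    (hα : ∀ t > 0, 0 ≤ α t) (hA : ∀ t > 0, HasDerivAt A (α t) t)
    (hA_nonneg : ∀ t > 0, 0 ≤ A t) (hAc : ContinuousOn A (Ici 0))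
    (hX : ∀ t ≥ 0, HasDerivAt X (-(α t • gradient f (X t))) t) :
    AntitoneOn (gradientFlowEnergy A f X xstar) (Ici 0) := by
  have hXc : ContinuousOn X (Ici 0) := fun t ht => (hX t ht).continuousAt.continuousWithinAt
  have hEc : ContinuousOn (gradientFlowEnergy A f X xstar) (Ici 0) :=
    (hAc.mul ((hf.continuous.comp_continuousOn hXc).sub continuousOn_const)).add
      (continuousOn_const.mul ((hXc.sub continuousOn_const).norm.pow 2))
  refine antitoneOn_of_deriv_nonpos (convex_Ici 0) hEc ?_ ?_ <;> rw [interior_Ici] <;>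
    intro t (ht : 0 < t) <;>
    have hE := hasDerivAt_gradientFlowEnergy (xstar := xstar) (hA t ht) (hX t ht.le)
      (hf (X t)).hasGradientAt
  · exact hE.differentiableAt.differentiableWithinAt
  · have hsub : f (X t) - f xstar ≤ ⟪gradient f (X t), X t - xstar⟫ := by
      have := hconv (X t)
      rw [← neg_sub, inner_neg_right] at this
      linarith
    rw [hE.deriv]
    exact gradientFlowEnergy_deriv_nonpos (hα t ht) (hA_nonneg t ht) hsub

end Energy

theorem nonautonomous_gradient_flow_convex_rate_general
    (d : ℕ) (f : EuclideanSpace ℝ (Fin d) → ℝ) (hf : Differentiable ℝ f)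
    (hconv : ∀ x y, f y ≥ f x + ⟪gradient f x, y - x⟫)
    (xstar : EuclideanSpace ℝ (Fin d))
    (α : ℝ → ℝ) (hαc : ContinuousOn α (Set.Ici 0))
    (hαnn : ∀ t ≥ (0 : ℝ), 0 ≤ α t)
    (x₀ : EuclideanSpace ℝ (Fin d))
    (X : ℝ → EuclideanSpace ℝ (Fin d)) (hX0 : X 0 = x₀)
    (hX : ∀ t ≥ (0 : ℝ), HasDerivAt X (-((α t) • gradient f (X t))) t)
    (V : ℝ → ℝ)
    (hV : ∀ t, V t = (∫ s in (0 : ℝ)..t, α s) * (f (X t) - f xstar)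
        + (1 / 2) * ‖X t - xstar‖ ^ 2) :
    AntitoneOn V (Set.Ici (0 : ℝ)) ∧
      ∀ t ≥ (0 : ℝ), 0 < (∫ s in (0 : ℝ)..t, α s) →
        f (X t) - f xstar ≤ ‖x₀ - xstar‖ ^ 2 / (2 * ∫ s in (0 : ℝ)..t, α s) := by
  have hVE : V = gradientFlowEnergy (fun t => ∫ s in (0 : ℝ)..t, α s) f X xstar := funext hV
  have hanti : AntitoneOn V (Ici 0) := hVE ▸
    antitoneOn_gradientFlowEnergy hf (fun x => hconv x xstar) (fun t ht => hαnn t ht.le)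
      (fun t ht => hasDerivAt_integral_of_continuousOn_Ici hαc ht)
      (fun t ht => intervalIntegral.integral_nonneg ht.le fun s hs => hαnn s hs.1)
      (continuousOn_integral_of_continuousOn_Ici hαc) hX
  refine ⟨hanti, fun t ht hA => ?_⟩
  have hVt : V t ≤ V 0 := hanti self_mem_Ici ht ht
  rw [hV, hV, hX0, intervalIntegral.integral_same, zero_mul, zero_add] at hVt
  rw [le_div_iff₀ (by positivity)]
  nlinarith [sq_nonneg ‖X t - xstar‖]

theorem nonautonomous_gradient_flow_convex_rate
    (d : ℕ) (f : EuclideanSpace ℝ (Fin d) → ℝ) (hf : Differentiable ℝ f)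
    (hconv : ∀ x y, f y ≥ f x + ⟪gradient f x, y - x⟫)
    (xstar : EuclideanSpace ℝ (Fin d)) (hmin : ∀ y, f xstar ≤ f y)
    (α : ℝ → ℝ) (hαc : ContinuousOn α (Set.Ici 0))
    (hαnn : ∀ t ≥ (0 : ℝ), 0 ≤ α t)
    (x₀ : EuclideanSpace ℝ (Fin d))
    (X : ℝ → EuclideanSpace ℝ (Fin d)) (hX0 : X 0 = x₀)
    (hX : ∀ t ≥ (0 : ℝ), HasDerivAt X (-((α t) • gradient f (X t))) t)
    (V : ℝ → ℝ)
    (hV : ∀ t, V t = (∫ s in (0 : ℝ)..t, α s) * (f (X t) - f xstar)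
        + (1 / 2) * ‖X t - xstar‖ ^ 2) :
    AntitoneOn V (Set.Ici (0 : ℝ)) ∧
      ∀ t ≥ (0 : ℝ), 0 < (∫ s in (0 : ℝ)..t, α s) →
        f (X t) - f xstar ≤ ‖x₀ - xstar‖ ^ 2 / (2 * ∫ s in (0 : ℝ)..t, α s) :=
  nonautonomous_gradient_flow_convex_rate_general d f hf hconv xstar α hαc hαnn x₀ X hX0 hX V hV
end

section
/- Let a, c ≥ 0 with (a,c) ≠ (0,0), and μ > 0. For the one-dimensional function f(x) = (μ/2)x² with minimizer x⋆ = 0 and minimum value f⋆ = 0, and the gradient flow trajectory X(t) = e^{-μ t} X(0) with X(0) ≠ 0, one has d/dt[a(f(X t) - f⋆) + c‖X t - x⋆‖²] = -2μ [a(f(X t) - f⋆) + c‖X t - x⋆‖²], so for every τ > 2μ the inequality d/dt[a(f(X t)-f⋆) + c‖X t - x⋆‖²] ≤ -τ[a(f(X t)-f⋆) + c‖X t - x⋆‖²] fails; that is, no such quadratic Lyapunov function certifies a rate τ > 2μ. -/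
open Real Set

theorem quadratic_lyapunov_exact_rate_two_mu
    (μ : ℝ) (hμ : 0 < μ) (a c : ℝ) (ha : 0 ≤ a) (hc : 0 ≤ c) (X0 : ℝ)
    (V : ℝ → ℝ)
    (hV : ∀ t, V t = a * ((μ / 2) * (X0 * Real.exp (-μ * t)) ^ 2)
        + c * (X0 * Real.exp (-μ * t)) ^ 2) :
    (∀ t, HasDerivAt V (-(2 * μ) * V t) t) ∧
      ∀ τ : ℝ, 2 * μ < τ → X0 ≠ 0 → ¬(a = 0 ∧ c = 0) →
        ¬(∀ t, deriv V t ≤ -τ * V t) := by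
  set K : ℝ := (a * (μ / 2) + c) * X0 ^ 2 with hK
  have hVK : ∀ t, V t = K * Real.exp (-(2 * μ) * t) := by
    intro t
    rw [hV t, hK, mul_pow, ← Real.exp_nat_mul]
    ring_nf
  have hder : ∀ t, HasDerivAt V (-(2 * μ) * V t) t := by
    intro t
    have h1 : HasDerivAt (fun t => K * Real.exp (-(2 * μ) * t))
        (K * (Real.exp (-(2 * μ) * t) * (-(2 * μ)))) t := by
      simpa using (((hasDerivAt_id t).const_mul (-(2 * μ))).exp).const_mul K
    have : HasDerivAt V (K * (Real.exp (-(2 * μ) * t) * (-(2 * μ)))) t := by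
      refine h1.congr_of_eventuallyEq ?_
      filter_upwards with s using (hVK s)
    convert this using 1
    rw [hVK t]; ring
  refine ⟨hder, ?_⟩
  intro τ hτ hX0 hac h
  have hKpos : 0 < K := by
    have hx2 : 0 < X0 ^ 2 := by positivity
    have : 0 < a * (μ / 2) + c := by
      rcases eq_or_lt_of_le ha with h1 | h1
      · rcases eq_or_lt_of_le hc with h2 | h2
        · exact absurd ⟨h1.symm, h2.symm⟩ hac
        · nlinarith
      · nlinarith
    exact mul_pos this hx2
  have h0 := h 0
  rw [(hder 0).deriv] at h0
  have hV0 : V 0 = K := by rw [hVK 0]; simp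
  rw [hV0] at h0
  nlinarith
end

section
/- Let f : ℝ^d → ℝ be convex differentiable with minimizer x⋆, and let X, X̄ : (0,∞) → ℝ^d be differentiable with X'(t) = -h ∇f(X t) for a constant h > 0 and X̄'(t) = (X t - X̄ t)/t (Polyak–Ruppert averaging). Then V(t) = t (f(X̄ t) - f(x⋆)) + (1/(2h)) ‖X t - x⋆‖² is nonincreasing on (0,∞). Consequently f(X̄ t) - f(x⋆) ≤ V(t₀)/t for t ≥ t₀ > 0. -/
/-!
Along the gradient flow, `V t = t (f (X̄ t) - f x⋆) + ‖X t - x⋆‖² / (2h)` has derivative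
`f (X̄ t) - f x⋆ + ⟪∇f (X̄ t), X t - X̄ t⟫ - ⟪∇f (X t), X t - x⋆⟫`: the factor `t` cancels the `1/t`
of the averaging equation and `h` cancels against `1/(2h)`. Two first-order convexity inequalities,
`f (X̄) + ⟪∇f (X̄), X - X̄⟫ ≤ f (X)` and `f (X) - f x⋆ ≤ ⟪∇f (X), X - x⋆⟫`, make it nonpositive.
Since the second term of `V` is nonnegative, `t (f (X̄ t) - f x⋆) ≤ V t ≤ V t₀`.
-/

open scoped RealInnerProductSpace
open Real Set

section

variable {E : Type*} [NormedAddCommGroup E]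

noncomputable def averagingLyapunov (f : E → ℝ) (xstar : E) (h : ℝ) (X Xbar : ℝ → E) (t : ℝ) :
    ℝ :=
  t * (f (Xbar t) - f xstar) + (1 / (2 * h)) * ‖X t - xstar‖ ^ 2

theorem mul_sub_le_averagingLyapunov (f : E → ℝ) (xstar : E) {h : ℝ} (hh : 0 < h)
    (X Xbar : ℝ → E) (t : ℝ) :
    t * (f (Xbar t) - f xstar) ≤ averagingLyapunov f xstar h X Xbar t :=
  le_add_of_nonneg_right (by positivity)

variable [InnerProductSpace ℝ E] [CompleteSpace E]

theorem hasDerivAt_averagingLyapunov {f : E → ℝ} {xstar : E} {h t : ℝ} {X Xbar : ℝ → E}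
    (hf : DifferentiableAt ℝ f (Xbar t)) (hh : h ≠ 0) (ht : t ≠ 0)
    (hX : HasDerivAt X (-(h • gradient f (X t))) t)
    (hXbar : HasDerivAt Xbar ((1 / t) • (X t - Xbar t)) t) :
    HasDerivAt (averagingLyapunov f xstar h X Xbar)
      (f (Xbar t) - f xstar + ⟪gradient f (Xbar t), X t - Xbar t⟫
        - ⟪gradient f (X t), X t - xstar⟫) t := by
  have hfXbar : HasDerivAt (fun s ↦ f (Xbar s))
      ⟪gradient f (Xbar t), (1 / t) • (X t - Xbar t)⟫ t := by
    simpa only [Function.comp_def, InnerProductSpace.toDual_apply_apply] using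
      hf.hasGradientAt.hasFDerivAt.comp_hasDerivAt t hXbar
  have hdist : HasDerivAt (fun s ↦ ‖X s - xstar‖ ^ 2)
      (2 * ⟪X t - xstar, -(h • gradient f (X t))⟫) t :=
    (hX.sub_const xstar).norm_sq
  refine (((hasDerivAt_id t).mul (hfXbar.sub_const (f xstar))).add
    (hdist.const_mul (1 / (2 * h)))).congr_deriv ?_
  rw [id, real_inner_smul_right, inner_neg_right, real_inner_smul_right,
    real_inner_comm (X t - xstar)]
  field_simp
  ring

theorem averagingLyapunov_deriv_nonpos {f : E → ℝ}
    (hconv : ∀ x y, f x + ⟪gradient f x, y - x⟫ ≤ f y) (x xbar xstar : E) :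
    f xbar - f xstar + ⟪gradient f xbar, x - xbar⟫ - ⟪gradient f x, x - xstar⟫ ≤ 0 := by
  have hxbar := hconv xbar x
  have hx := hconv x xstar
  rw [← neg_sub x xstar, inner_neg_right] at hx
  linarith

theorem antitoneOn_averagingLyapunov {f : E → ℝ} (hf : Differentiable ℝ f)
    (hconv : ∀ x y, f x + ⟪gradient f x, y - x⟫ ≤ f y) (xstar : E) {h : ℝ} (hh : h ≠ 0)
    {X Xbar : ℝ → E} (hX : ∀ t ∈ Ioi (0 : ℝ), HasDerivAt X (-(h • gradient f (X t))) t)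
    (hXbar : ∀ t ∈ Ioi (0 : ℝ), HasDerivAt Xbar ((1 / t) • (X t - Xbar t)) t) :
    AntitoneOn (averagingLyapunov f xstar h X Xbar) (Ioi 0) := by
  have hderiv (t : ℝ) (ht : t ∈ Ioi (0 : ℝ)) :=
    hasDerivAt_averagingLyapunov (xstar := xstar) (hf _) hh (ne_of_gt ht) (hX t ht) (hXbar t ht)
  refine antitoneOn_of_hasDerivWithinAt_nonpos (convex_Ioi 0)
    (fun t ht ↦ (hderiv t ht).continuousAt.continuousWithinAt) ?_
    (fun t _ ↦ averagingLyapunov_deriv_nonpos hconv (X t) (Xbar t) xstar)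
  rw [interior_Ioi]
  exact fun t ht ↦ (hderiv t ht).hasDerivWithinAt

end

theorem polyak_ruppert_averaging_flow_rate_general
    (d : ℕ) (f : EuclideanSpace ℝ (Fin d) → ℝ) (hf : Differentiable ℝ f)
    (hconv : ∀ x y, f y ≥ f x + ⟪gradient f x, y - x⟫)
    (xstar : EuclideanSpace ℝ (Fin d))
    (h : ℝ) (hh : 0 < h)
    (X Xbar : ℝ → EuclideanSpace ℝ (Fin d))
    (hX : ∀ t ∈ Set.Ioi (0 : ℝ), HasDerivAt X (-(h • gradient f (X t))) t)
    (hXbar : ∀ t ∈ Set.Ioi (0 : ℝ),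
      HasDerivAt Xbar ((1 / t) • (X t - Xbar t)) t)
    (V : ℝ → ℝ)
    (hV : ∀ t, V t = t * (f (Xbar t) - f xstar)
        + (1 / (2 * h)) * ‖X t - xstar‖ ^ 2) :
    AntitoneOn V (Set.Ioi (0 : ℝ)) ∧
      ∀ t₀ t : ℝ, 0 < t₀ → t₀ ≤ t → f (Xbar t) - f xstar ≤ V t₀ / t := by
  obtain rfl : V = averagingLyapunov f xstar h X Xbar := funext hV
  have hanti := antitoneOn_averagingLyapunov hf hconv xstar hh.ne' hX hXbar
  refine ⟨hanti, fun t₀ t ht₀ htt₀ ↦ ?_⟩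
  have ht : 0 < t := ht₀.trans_le htt₀
  rw [le_div_iff₀ ht, mul_comm]
  exact (mul_sub_le_averagingLyapunov f xstar hh X Xbar t).trans (hanti ht₀ ht htt₀)

theorem polyak_ruppert_averaging_flow_rate
    (d : ℕ) (f : EuclideanSpace ℝ (Fin d) → ℝ) (hf : Differentiable ℝ f)
    (hconv : ∀ x y, f y ≥ f x + ⟪gradient f x, y - x⟫)
    (xstar : EuclideanSpace ℝ (Fin d)) (hmin : ∀ y, f xstar ≤ f y)
    (h : ℝ) (hh : 0 < h)
    (X Xbar : ℝ → EuclideanSpace ℝ (Fin d))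
    (hX : ∀ t ∈ Set.Ioi (0 : ℝ), HasDerivAt X (-(h • gradient f (X t))) t)
    (hXbar : ∀ t ∈ Set.Ioi (0 : ℝ),
      HasDerivAt Xbar ((1 / t) • (X t - Xbar t)) t)
    (V : ℝ → ℝ)
    (hV : ∀ t, V t = t * (f (Xbar t) - f xstar)
        + (1 / (2 * h)) * ‖X t - xstar‖ ^ 2) :
    AntitoneOn V (Set.Ioi (0 : ℝ)) ∧
      ∀ t₀ t : ℝ, 0 < t₀ → t₀ ≤ t → f (Xbar t) - f xstar ≤ V t₀ / t :=
  polyak_ruppert_averaging_flow_rate_general d f hf hconv xstar h hh X Xbar hX hXbar V hV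
end

section
/- Let f : ℝ^d → ℝ be convex differentiable with minimizer x⋆, u, h : (0,∞) → (0,∞) continuous with U(t) = ∫₀ᵗ u(s)ds finite and positive, and suppose t ↦ u(t)/(2h(t)) is differentiable and nonincreasing. Let X, X̄ : (0,∞) → ℝ^d be differentiable with X'(t) = -h(t)∇f(X t) and X̄'(t) = (X t - X̄ t) u(t)/U(t) (weighted averaging). Then V(t) = U(t)(f(X̄ t) - f(x⋆)) + (u(t)/(2h(t)))‖X t - x⋆‖² is nonincreasing on (0,∞). -/
open scoped RealInnerProductSpace
open Real Set

/-- If a function is antitone on `Ioi 0` and has a derivative at `t > 0`,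
then that derivative is nonpositive. -/
lemma aux_deriv_nonpos_of_antitoneOn {r : ℝ → ℝ} {t r' : ℝ} (ht : 0 < t)
    (hanti : AntitoneOn r (Set.Ioi 0)) (hd : HasDerivAt r r' t) : r' ≤ 0 := by
  have hslope := hasDerivAt_iff_tendsto_slope.mp hd
  have h1 : Filter.Tendsto (slope r t) (nhdsWithin t (Set.Ioi t)) (nhds r') :=
    hslope.mono_left (nhdsWithin_mono t (by intro x hx; exact ne_of_gt hx))
  refine le_of_tendsto h1 ?_
  filter_upwards [self_mem_nhdsWithin] with x hx
  have hx' : t < x := hx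
  have hnum : r x - r t ≤ 0 :=
    sub_nonpos.2 (hanti (mem_Ioi.2 ht) (mem_Ioi.2 (ht.trans hx')) hx'.le)
  have hden : 0 ≤ x - t := sub_nonneg.2 hx'.le
  rw [slope_def_field]
  exact div_nonpos_iff.2 (Or.inr ⟨hnum, hden⟩)

theorem weighted_averaging_flow_lyapunov
    (d : ℕ) (f : EuclideanSpace ℝ (Fin d) → ℝ) (hf : Differentiable ℝ f)
    (hconv : ∀ x y, f y ≥ f x + ⟪gradient f x, y - x⟫)
    (xstar : EuclideanSpace ℝ (Fin d)) (hmin : ∀ y, f xstar ≤ f y)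
    (u h : ℝ → ℝ)
    (huc : ContinuousOn u (Set.Ioi 0)) (hhc : ContinuousOn h (Set.Ioi 0))
    (hupos : ∀ t ∈ Set.Ioi (0 : ℝ), 0 < u t)
    (hhpos : ∀ t ∈ Set.Ioi (0 : ℝ), 0 < h t)
    (huint : ∀ t ∈ Set.Ioi (0 : ℝ), IntervalIntegrable u MeasureTheory.volume 0 t)
    (hUpos : ∀ t ∈ Set.Ioi (0 : ℝ), 0 < ∫ s in (0 : ℝ)..t, u s)
    (hratio_diff : ∀ t ∈ Set.Ioi (0 : ℝ),
      DifferentiableAt ℝ (fun s => u s / (2 * h s)) t)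
    (hratio_anti : AntitoneOn (fun t => u t / (2 * h t)) (Set.Ioi 0))
    (X Xbar : ℝ → EuclideanSpace ℝ (Fin d))
    (hX : ∀ t ∈ Set.Ioi (0 : ℝ), HasDerivAt X (-((h t) • gradient f (X t))) t)
    (hXbar : ∀ t ∈ Set.Ioi (0 : ℝ),
      HasDerivAt Xbar ((u t / ∫ s in (0 : ℝ)..t, u s) • (X t - Xbar t)) t)
    (V : ℝ → ℝ)
    (hV : ∀ t, V t = (∫ s in (0 : ℝ)..t, u s) * (f (Xbar t) - f xstar)
        + (u t / (2 * h t)) * ‖X t - xstar‖ ^ 2) :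
    AntitoneOn V (Set.Ioi (0 : ℝ)) := by
  set U : ℝ → ℝ := fun t => ∫ s in (0 : ℝ)..t, u s with hU_def
  set r : ℝ → ℝ := fun t => u t / (2 * h t) with hr_def
  -- The derivative of V at each point of Ioi 0
  set D : ℝ → ℝ := fun t =>
    (u t * (f (Xbar t) - f xstar)
      + U t * ⟪gradient f (Xbar t), (u t / U t) • (X t - Xbar t)⟫)
    + (deriv r t * ⟪X t - xstar, X t - xstar⟫
      + r t * (⟪X t - xstar, -((h t) • gradient f (X t))⟫
          + ⟪-((h t) • gradient f (X t)), X t - xstar⟫)) with hD_def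
  have key : ∀ t ∈ Set.Ioi (0 : ℝ), HasDerivAt V (D t) t := by
    intro t ht
    have ht0 : (0 : ℝ) < t := ht
    -- derivative of U
    have hU' : HasDerivAt U (u t) t := by
      exact intervalIntegral.integral_hasDerivAt_right (huint t ht)
        (huc.stronglyMeasurableAtFilter isOpen_Ioi t ht)
        (huc.continuousAt (isOpen_Ioi.mem_nhds ht))
    -- derivative of f ∘ Xbar
    have hgrad : HasFDerivAt f
        ((InnerProductSpace.toDual ℝ (EuclideanSpace ℝ (Fin d))) (gradient f (Xbar t)))
        (Xbar t) := (hf (Xbar t)).hasGradientAt.hasFDerivAt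
    have hfXbar : HasDerivAt (fun s => f (Xbar s))
        ⟪gradient f (Xbar t), (u t / U t) • (X t - Xbar t)⟫ t := by
      have h2 := hgrad.comp_hasDerivAt t (hXbar t ht)
      rw [InnerProductSpace.toDual_apply_apply] at h2
      exact h2
    -- derivative of the squared-norm term written as inner product
    have hW : HasDerivAt (fun s => X s - xstar) (-((h t) • gradient f (X t))) t :=
      (hX t ht).sub_const xstar
    have hq : HasDerivAt (fun s => ⟪X s - xstar, X s - xstar⟫)
        (⟪X t - xstar, -((h t) • gradient f (X t))⟫
          + ⟪-((h t) • gradient f (X t)), X t - xstar⟫) t := hW.inner ℝ hW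
    have hr' : HasDerivAt r (deriv r t) t := (hratio_diff t ht).hasDerivAt
    have hsum : HasDerivAt (fun s => U s * (f (Xbar s) - f xstar)
        + r s * ⟪X s - xstar, X s - xstar⟫) (D t) t := by
      exact (hU'.mul (hfXbar.sub_const (f xstar))).add (hr'.mul hq)
    have hVeq : V = fun s => U s * (f (Xbar s) - f xstar)
        + r s * ⟪X s - xstar, X s - xstar⟫ := by
      funext s
      rw [hV s, real_inner_self_eq_norm_sq]
    rw [hVeq]
    exact hsum
  have hDnonpos : ∀ t ∈ Set.Ioi (0 : ℝ), D t ≤ 0 := by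
    intro t ht
    have ht0 : (0 : ℝ) < t := ht
    have hUt : 0 < U t := hUpos t ht
    have hut : 0 < u t := hupos t ht
    have hht : 0 < h t := hhpos t ht
    have hrderiv : deriv r t ≤ 0 :=
      aux_deriv_nonpos_of_antitoneOn ht0 hratio_anti (hratio_diff t ht).hasDerivAt
    have hWW : (0:ℝ) ≤ ⟪X t - xstar, X t - xstar⟫ := real_inner_self_nonneg
    have hc1 : f (X t) ≥ f (Xbar t) + ⟪gradient f (Xbar t), X t - Xbar t⟫ :=
      hconv (Xbar t) (X t)
    have hc2 : f xstar ≥ f (X t) + ⟪gradient f (X t), xstar - X t⟫ :=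
      hconv (X t) xstar
    -- rewrite D
    have e1 : U t * ⟪gradient f (Xbar t), (u t / U t) • (X t - Xbar t)⟫
        = u t * ⟪gradient f (Xbar t), X t - Xbar t⟫ := by
      rw [real_inner_smul_right]
      field_simp
    have e2 : ⟪X t - xstar, -((h t) • gradient f (X t))⟫
        = -(h t * ⟪gradient f (X t), X t - xstar⟫) := by
      rw [inner_neg_right, real_inner_smul_right, real_inner_comm]
    have e3 : ⟪-((h t) • gradient f (X t)), X t - xstar⟫
        = -(h t * ⟪gradient f (X t), X t - xstar⟫) := by
      rw [inner_neg_left, real_inner_smul_left]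
    have e4 : r t * (2 * h t) = u t := by
      rw [hr_def]
      field_simp
    have e5 : ⟪gradient f (X t), xstar - X t⟫
        = -⟪gradient f (X t), X t - xstar⟫ := by
      rw [← inner_neg_right]; congr 1; abel
    rw [hD_def]
    simp only [e1, e2, e3]
    have hc2' : ⟪gradient f (X t), X t - xstar⟫ ≥ f (X t) - f xstar := by
      rw [e5] at hc2; linarith
    have hrq : deriv r t * ⟪X t - xstar, X t - xstar⟫ ≤ 0 :=
      mul_nonpos_of_nonpos_of_nonneg hrderiv hWW
    have hrt : 0 < r t := by
      rw [hr_def]; positivity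
    have hmain : r t * (-(h t * ⟪gradient f (X t), X t - xstar⟫)
        + -(h t * ⟪gradient f (X t), X t - xstar⟫))
        = -(u t * ⟪gradient f (X t), X t - xstar⟫) := by
      have : r t * (-(h t * ⟪gradient f (X t), X t - xstar⟫)
          + -(h t * ⟪gradient f (X t), X t - xstar⟫))
          = -((r t * (2 * h t)) * ⟪gradient f (X t), X t - xstar⟫) := by ring
      rw [this, e4]
    rw [hmain]
    have hc1' : ⟪gradient f (Xbar t), X t - Xbar t⟫ ≤ f (X t) - f (Xbar t) := by linarith
    have m1 := mul_le_mul_of_nonneg_left hc2' hut.le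
    have m2 := mul_le_mul_of_nonneg_left hc1' hut.le
    nlinarith [hrq, m1, m2]
  -- conclude
  have hinterior : interior (Set.Ioi (0:ℝ)) = Set.Ioi 0 := interior_Ioi
  refine antitoneOn_of_deriv_nonpos (convex_Ioi 0) ?_ ?_ ?_
  · intro t ht
    exact (key t ht).continuousAt.continuousWithinAt
  · rw [hinterior]
    intro t ht
    exact (key t ht).differentiableAt.differentiableWithinAt
  · rw [hinterior]
    intro t ht
    rw [(key t ht).deriv]
    exact hDnonpos t ht
end
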